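/- arXiv:1611.00563 — 2 statements merged into one kernel-verified Lean document; each statement's English description precedes it below -/
import Mathlib

section
/- Let p > 1 and let α, β satisfy 0 < β < α ≤ (p-1)/p. Define λ_α = (p-1)α^{p-1}(1-α), λ_β = (p-1)β^{p-1}(1-β), and A = (p-2)·λ_α·(β/α) + λ_β·(α/β)^{p-2}. Then A < (p-1)·λ_α. -/
open Real

/-!
Both terms of `A` carry the factor `(p-1)·α^(p-2)·β` once `x^(p-1) = x^(p-2)·x` is used, and so
does `(p-1)·λ_α` up to `β`. Cancelling it, the claim becomes a polynomial inequality whose gap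
factors as `(α - β)·((p-1)(1-α) - β)`; the second factor is positive because
`α ≤ (p-1)/p` is equivalent to `α ≤ (p-1)(1-α)`.
-/

noncomputable def lam (p x : ℝ) : ℝ := (p - 1) * x ^ (p - 1) * (1 - x)

lemma rpow_sub_one_eq_rpow_sub_two_mul {x : ℝ} (hx : 0 < x) (p : ℝ) :
    x ^ (p - 1) = x ^ (p - 2) * x := by
  rw [show p - 1 = p - 2 + 1 by ring, rpow_add_one hx.ne']

lemma lam_mul_div {x : ℝ} (hx : 0 < x) (p y : ℝ) :
    lam p x * (y / x) = (p - 1) * x ^ (p - 2) * y * (1 - x) := by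
  rw [lam, rpow_sub_one_eq_rpow_sub_two_mul hx]
  field_simp

lemma lam_mul_div_rpow {x y : ℝ} (hx : 0 < x) (hy : 0 < y) (p : ℝ) :
    lam p y * (x / y) ^ (p - 2) = (p - 1) * x ^ (p - 2) * y * (1 - y) := by
  have hy' : 0 < y ^ (p - 2) := rpow_pos_of_pos hy _
  rw [lam, rpow_sub_one_eq_rpow_sub_two_mul hy, div_rpow hx.le hy.le]
  field_simp

lemma sub_one_mul_lam {x : ℝ} (hx : 0 < x) (p : ℝ) :
    (p - 1) * lam p x = (p - 1) * x ^ (p - 2) * ((p - 1) * x * (1 - x)) := by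
  rw [lam, rpow_sub_one_eq_rpow_sub_two_mul hx]
  ring

lemma le_sub_one_mul_one_sub_of_le_div {p α : ℝ} (hp : 0 < p) (hα : α ≤ (p - 1) / p) :
    α ≤ (p - 1) * (1 - α) := by
  rw [le_div_iff₀ hp] at hα
  linarith

lemma mul_add_one_sub_lt {p α β : ℝ} (hβα : β < α) (hβ : β < (p - 1) * (1 - α)) :
    β * ((p - 2) * (1 - α) + (1 - β)) < (p - 1) * α * (1 - α) := by
  have gap : (p - 1) * α * (1 - α) - β * ((p - 2) * (1 - α) + (1 - β))
      = (α - β) * ((p - 1) * (1 - α) - β) := by ring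
  linarith [mul_pos (sub_pos.2 hβα) (sub_pos.2 hβ)]

/-- For `p > 1` and `0 < β < α ≤ (p-1)/p`, with `λ_α = (p-1)α^(p-1)(1-α)`,
`λ_β = (p-1)β^(p-1)(1-β)` and `A = (p-2)·λ_α·(β/α) + λ_β·(α/β)^(p-2)`, one has
`A < (p-1)·λ_α`. -/
theorem stmt3 (p α β : ℝ) (hp : 1 < p) (hβ0 : 0 < β) (hβα : β < α) (hα : α ≤ (p - 1) / p) :
    (p - 2) * ((p - 1) * α ^ (p - 1) * (1 - α)) * (β / α)
      + ((p - 1) * β ^ (p - 1) * (1 - β)) * (α / β) ^ (p - 2)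
      < (p - 1) * ((p - 1) * α ^ (p - 1) * (1 - α)) := by
  have hα0 : 0 < α := hβ0.trans hβα
  have hβ : β < (p - 1) * (1 - α) :=
    hβα.trans_le (le_sub_one_mul_one_sub_of_le_div (by linarith) hα)
  have hfactor : 0 < (p - 1) * α ^ (p - 2) := mul_pos (by linarith) (rpow_pos_of_pos hα0 _)
  change (p - 2) * lam p α * (β / α) + lam p β * (α / β) ^ (p - 2) < (p - 1) * lam p α
  calc (p - 2) * lam p α * (β / α) + lam p β * (α / β) ^ (p - 2)
      = (p - 1) * α ^ (p - 2) * (β * ((p - 2) * (1 - α) + (1 - β))) := by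
        rw [mul_assoc, lam_mul_div hα0, lam_mul_div_rpow hα0 hβ0]
        ring
    _ < (p - 1) * α ^ (p - 2) * ((p - 1) * α * (1 - α)) :=
        mul_lt_mul_of_pos_left (mul_add_one_sub_lt hβα hβ) hfactor
    _ = (p - 1) * lam p α := (sub_one_mul_lam hα0 p).symm
end

section
/- Let U ⊂ ℝⁿ be open and G : U → (0,∞) a positive C² function with nonvanishing gradient. Then for all α, β > 0, Δ_p(G^α + G^β) = |αG^{α-1} + βG^{β-1}|^{p-2} · [ (αG^{α-1} + βG^{β-1})·Δ_p G + (p-1)|∇G|^p·((α²-α)G^{α-2} + (β²-β)G^{β-2}) ] pointwise in U. -/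
/-!
For `u = φ ∘ G` with `φ' > 0` the chain rule gives `∇u = φ'(G) ∇G`, so the p-Laplacian vector
field of `u` is `φ'(G)^{p-1} |∇G|^{p-2} ∇G`. The product rule for the divergence then yields
`Δ_p (φ ∘ G) = φ'(G)^{p-1} Δ_p G + (p-1) φ'(G)^{p-2} φ''(G) |∇G|^p`; for `φ t = t^α + t^β` we have
`φ' > 0` on `(0, ∞)`, and `φ'^{p-1} = |φ'|^{p-2} φ'` gives the stated form.
-/

open Real

/-- The vector field `|∇u|^{p-2}∇u` entering the p-Laplacian. -/
noncomputable def pLapVF (n : ℕ) (p : ℝ) (u : EuclideanSpace ℝ (Fin n) → ℝ)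
    (x : EuclideanSpace ℝ (Fin n)) : EuclideanSpace ℝ (Fin n) :=
  ‖gradient u x‖ ^ (p - 2) • gradient u x

/-- The (pointwise) p-Laplacian `Δ_p u = div(|∇u|^{p-2}∇u)`. -/
noncomputable def pLap (n : ℕ) (p : ℝ) (u : EuclideanSpace ℝ (Fin n) → ℝ)
    (x : EuclideanSpace ℝ (Fin n)) : ℝ :=
  ∑ i : Fin n, fderiv ℝ (pLapVF n p u) x (EuclideanSpace.single i 1) i

open InnerProductSpace Filter Topology

section

variable {F : Type*} [NormedAddCommGroup F] [InnerProductSpace ℝ F] [CompleteSpace F]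

theorem HasDerivAt.hasGradientAt_comp {φ : ℝ → ℝ} {c : ℝ} {G : F → ℝ} {x : F}
    (hφ : HasDerivAt φ c (G x)) (hG : DifferentiableAt ℝ G x) :
    HasGradientAt (fun y => φ (G y)) (c • gradient G x) x := by
  rw [hasGradientAt_iff_hasFDerivAt, map_smul, toDual_gradient]
  exact hφ.comp_hasFDerivAt x hG.hasFDerivAt

theorem ContDiffAt.gradient {G : F → ℝ} {x : F} {k m : WithTop ℕ∞}
    (hG : ContDiffAt ℝ k G x) (hmk : m + 1 ≤ k) : ContDiffAt ℝ m (gradient G) x :=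
  (toDual ℝ F).symm.contDiff.contDiffAt.comp x (hG.fderiv_right hmk)

end

section

variable {n : ℕ}

noncomputable def divergence (V : EuclideanSpace ℝ (Fin n) → EuclideanSpace ℝ (Fin n))
    (x : EuclideanSpace ℝ (Fin n)) : ℝ :=
  ∑ i : Fin n, fderiv ℝ V x (EuclideanSpace.single i 1) i

theorem pLap_eq_divergence (p : ℝ) (u : EuclideanSpace ℝ (Fin n) → ℝ)
    (x : EuclideanSpace ℝ (Fin n)) : pLap n p u x = divergence (pLapVF n p u) x :=
  rfl

theorem Filter.EventuallyEq.divergence_eq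
    {V W : EuclideanSpace ℝ (Fin n) → EuclideanSpace ℝ (Fin n)} {x : EuclideanSpace ℝ (Fin n)}
    (h : V =ᶠ[𝓝 x] W) : divergence V x = divergence W x := by
  simp only [divergence, h.fderiv_eq]

theorem ContinuousLinearMap.sum_apply_single_mul (L : EuclideanSpace ℝ (Fin n) →L[ℝ] ℝ)
    (v : EuclideanSpace ℝ (Fin n)) : ∑ i, L (EuclideanSpace.single i 1) * v i = L v := by
  conv_rhs => rw [← (EuclideanSpace.basisFun (Fin n) ℝ).sum_repr v]
  simp [mul_comm]

theorem divergence_smul {c : EuclideanSpace ℝ (Fin n) → ℝ}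
    {V : EuclideanSpace ℝ (Fin n) → EuclideanSpace ℝ (Fin n)} {x : EuclideanSpace ℝ (Fin n)}
    (hc : DifferentiableAt ℝ c x) (hV : DifferentiableAt ℝ V x) :
    divergence (fun y => c y • V y) x = c x * divergence V x + fderiv ℝ c x (V x) := by
  simp only [divergence, fderiv_fun_smul hc hV, add_apply,
    smul_apply, ContinuousLinearMap.smulRight_apply, PiLp.add_apply,
    PiLp.smul_apply, smul_eq_mul, Finset.sum_add_distrib, ← Finset.mul_sum,
    ContinuousLinearMap.sum_apply_single_mul]

theorem differentiableAt_pLapVF {p : ℝ} {G : EuclideanSpace ℝ (Fin n) → ℝ}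
    {x : EuclideanSpace ℝ (Fin n)} (hG : ContDiffAt ℝ 2 G x) (hGx : gradient G x ≠ 0) :
    DifferentiableAt ℝ (pLapVF n p G) x := by
  have hgrad : ContDiffAt ℝ 1 (gradient G) x := hG.gradient (by norm_num)
  exact (((hgrad.norm ℝ hGx).differentiableAt one_ne_zero).rpow_const
    (Or.inl (norm_ne_zero_iff.2 hGx))).smul (hgrad.differentiableAt one_ne_zero)

theorem pLapVF_eq_rpow_smul_of_gradient_eq_smul {p c : ℝ} {u G : EuclideanSpace ℝ (Fin n) → ℝ}
    {x : EuclideanSpace ℝ (Fin n)} (hc : 0 < c) (h : gradient u x = c • gradient G x) :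
    pLapVF n p u x = c ^ (p - 1) • pLapVF n p G x := by
  have hc_pow : c ^ (p - 1) = c ^ (p - 2) * c := by
    rw [show p - 1 = p - 2 + 1 by ring, rpow_add_one hc.ne']
  rw [pLapVF, pLapVF, h, norm_smul, norm_of_nonneg hc.le, mul_rpow hc.le (norm_nonneg _),
    smul_smul, smul_smul, hc_pow]
  ring_nf

theorem pLap_comp {p φ'' : ℝ} {φ φ' : ℝ → ℝ} {G : EuclideanSpace ℝ (Fin n) → ℝ}
    {x : EuclideanSpace ℝ (Fin n)} (hG : ContDiffAt ℝ 2 G x) (hGx : gradient G x ≠ 0)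
    (hφ : ∀ᶠ t in 𝓝 (G x), HasDerivAt φ (φ' t) t ∧ 0 < φ' t)
    (hφ' : HasDerivAt φ' φ'' (G x)) :
    pLap n p (fun y => φ (G y)) x = φ' (G x) ^ (p - 1) * pLap n p G x
      + (p - 1) * φ' (G x) ^ (p - 2) * φ'' * ‖gradient G x‖ ^ p := by
  have hφG : ∀ᶠ y in 𝓝 x, (HasDerivAt φ (φ' (G y)) (G y) ∧ 0 < φ' (G y)) ∧
      DifferentiableAt ℝ G y :=
    (hG.continuousAt.eventually hφ).and
      ((hG.eventually (by simp)).mono fun y hy => hy.differentiableAt two_ne_zero)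
  have hVF : pLapVF n p (fun y => φ (G y)) =ᶠ[𝓝 x]
      fun y => φ' (G y) ^ (p - 1) • pLapVF n p G y :=
    hφG.mono fun y ⟨⟨hφy, hpos⟩, hGy⟩ =>
      pLapVF_eq_rpow_smul_of_gradient_eq_smul hpos (hφy.hasGradientAt_comp hGy).gradient
  obtain ⟨⟨-, hpos⟩, -⟩ := hφG.self_of_nhds
  have hc : HasGradientAt (fun y => φ' (G y) ^ (p - 1))
      ((φ'' * (p - 1) * φ' (G x) ^ (p - 1 - 1)) • gradient G x) x :=
    (hφ'.rpow_const (Or.inl hpos.ne')).hasGradientAt_comp (hG.differentiableAt two_ne_zero)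
  have hnorm : ‖gradient G x‖ ^ (p - 2) * ‖gradient G x‖ ^ 2 = ‖gradient G x‖ ^ p := by
    rw [← rpow_natCast, ← rpow_add (norm_pos_iff.2 hGx)]
    norm_num
  rw [pLap_eq_divergence, hVF.divergence_eq,
    divergence_smul hc.differentiableAt (differentiableAt_pLapVF hG hGx), ← pLap_eq_divergence,
    hc.fderiv_apply, pLapVF, real_inner_smul_left, real_inner_smul_right,
    real_inner_self_eq_norm_sq, ← hnorm, sub_sub, one_add_one_eq_two]
  ring

end

theorem stmt8_general (n : ℕ) (p : ℝ) (U : Set (EuclideanSpace ℝ (Fin n)))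
    (hU : IsOpen U) (G : EuclideanSpace ℝ (Fin n) → ℝ) (hG : ContDiffOn ℝ 2 G U)
    (hGpos : ∀ x ∈ U, 0 < G x) (hGgrad : ∀ x ∈ U, gradient G x ≠ 0)
    (α β : ℝ) (hα : 0 < α) (hβ : 0 < β) :
    ∀ x ∈ U, pLap n p (fun y => G y ^ α + G y ^ β) x
      = |α * G x ^ (α - 1) + β * G x ^ (β - 1)| ^ (p - 2) *
          ((α * G x ^ (α - 1) + β * G x ^ (β - 1)) * pLap n p G x
            + (p - 1) * ‖gradient G x‖ ^ p *
                ((α ^ 2 - α) * G x ^ (α - 2) + (β ^ 2 - β) * G x ^ (β - 2))) := by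
  intro x hx
  have hGx : 0 < G x := hGpos x hx
  have hφ : ∀ᶠ t in 𝓝 (G x), HasDerivAt (fun t => t ^ α + t ^ β)
      (α * t ^ (α - 1) + β * t ^ (β - 1)) t ∧ 0 < α * t ^ (α - 1) + β * t ^ (β - 1) :=
    (eventually_gt_nhds hGx).mono fun t ht =>
      ⟨(hasDerivAt_rpow_const (Or.inl ht.ne')).add (hasDerivAt_rpow_const (Or.inl ht.ne')),
        by positivity⟩
  have hφ' : HasDerivAt (fun t => α * t ^ (α - 1) + β * t ^ (β - 1))
      (α * ((α - 1) * G x ^ (α - 1 - 1)) + β * ((β - 1) * G x ^ (β - 1 - 1))) (G x) :=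
    ((hasDerivAt_rpow_const (Or.inl hGx.ne')).const_mul α).add
      ((hasDerivAt_rpow_const (Or.inl hGx.ne')).const_mul β)
  have hc : 0 < α * G x ^ (α - 1) + β * G x ^ (β - 1) := hφ.self_of_nhds.2
  rw [pLap_comp (hG.contDiffAt (hU.mem_nhds hx)) (hGgrad x hx) hφ hφ', abs_of_pos hc,
    show p - 1 = p - 2 + 1 by ring, rpow_add_one hc.ne', sub_sub, sub_sub, one_add_one_eq_two]
  ring

/-- For a positive C² function `G` with nonvanishing gradient on an open set `U` and
`α, β > 0`, the pointwise formula for `Δ_p(G^α + G^β)` holds in `U`. -/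
theorem stmt8 (n : ℕ) (p : ℝ) (hp : 1 < p) (U : Set (EuclideanSpace ℝ (Fin n)))
    (hU : IsOpen U) (G : EuclideanSpace ℝ (Fin n) → ℝ) (hG : ContDiffOn ℝ 2 G U)
    (hGpos : ∀ x ∈ U, 0 < G x) (hGgrad : ∀ x ∈ U, gradient G x ≠ 0)
    (α β : ℝ) (hα : 0 < α) (hβ : 0 < β) :
    ∀ x ∈ U, pLap n p (fun y => G y ^ α + G y ^ β) x
      = |α * G x ^ (α - 1) + β * G x ^ (β - 1)| ^ (p - 2) *
          ((α * G x ^ (α - 1) + β * G x ^ (β - 1)) * pLap n p G x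
            + (p - 1) * ‖gradient G x‖ ^ p *
                ((α ^ 2 - α) * G x ^ (α - 2) + (β ^ 2 - β) * G x ^ (β - 2))) :=
  stmt8_general n p U hU G hG hGpos hGgrad α β hα hβ
end
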